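/- arXiv:1011.0141 — 6 statements merged into one kernel-verified Lean document; each statement's English description precedes it below -/
import Mathlib

section
/- Fix real parameters a₁, a₂, α₁, α₂, β₁, β₂, γ₁, γ₂, ξ₁, ξ₂, ξ₃, ξ₄, ζ and let Q₊ be the associated multilinear polynomial. Let C, D ∈ ℝ with D ≠ 0, and define the transformed coefficients a₁' = D³a₁, a₂' = D³a₂, α₁' = D²(α₁ + C(a₁+a₂)), α₂' = D²α₂, β₁' = D²(β₁ + C(a₁+a₂)), β₂' = D²β₂, γ₁' = D²(γ₁ + 2Ca₁), γ₂' = D²(γ₂ + 2Ca₂), ξ₁' = Dξ₁ + (1/2)CD[3C(a₁+a₂) + γ₁ + γ₂ + 2(α₁ − α₂ + β₁)], ξ₂' = Dξ₂ + (1/2)CD[3C(a₁+a₂) + γ₁ + γ₂ + 2(α₁ + α₂ + β₁)], ξ₃' = Dξ₃ + (1/2)CD[C(a₁−a₂) + γ₁ − γ₂ + 2β₂], ξ₄' = Dξ₄ + (1/2)CD[C(a₁−a₂) + γ₁ − γ₂ − 2β₂], ζ' = ζ + C²[2C(a₁+a₂) + γ₁ + γ₂ + 2(α₁+β₁)] +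 2C(ξ₁+ξ₂), and let Q₊' be the multilinear polynomial with these primed coefficients. Then for all w, w₁, w₂, w₁₂ ∈ ℝ with Cw+D ≠ 0, Cw₁+D ≠ 0, Cw₂+D ≠ 0, Cw₁₂+D ≠ 0, one has Q₊(w/(Cw+D), w₁/(Cw₁+D), w₂/(Cw₂+D), w₁₂/(Cw₁₂+D))·(Cw+D)(Cw₁+D)(Cw₂+D)(Cw₁₂+D) = Q₊'(w, w₁, w₂, w₁₂). In particular the class of equations Q₊ = 0 is invariant under the restricted Möbius transformations u ↦ u/(Cu+D). -/
/-- The dispersive multilinear quad-equation polynomial `Q₊`. -/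
def Qplus (a₁ a₂ α₁ α₂ β₁ β₂ γ₁ γ₂ ξ₁ ξ₂ ξ₃ ξ₄ ζ : ℝ)
    (u u₁ u₂ u₁₂ : ℝ) : ℝ :=
  a₁ * (u + u₁₂) + a₂ * (u₁ + u₂) +
    (α₁ - α₂) * u * u₁ + (α₁ + α₂) * u₂ * u₁₂ +
    (β₁ - β₂) * u * u₂ + (β₁ + β₂) * u₁ * u₁₂ +
    γ₁ * u * u₁₂ + γ₂ * u₁ * u₂ +
    (ξ₁ - ξ₃) * u * u₁ * u₂ + (ξ₁ + ξ₃) * u * u₁ * u₁₂ +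
    (ξ₂ - ξ₄) * u₁ * u₂ * u₁₂ + (ξ₂ + ξ₄) * u * u₂ * u₁₂ +
    ζ * u * u₁ * u₂ * u₁₂


private lemma Qplus_clear (a₁ a₂ α₁ α₂ β₁ β₂ γ₁ γ₂ ξ₁ ξ₂ ξ₃ ξ₄ ζ : ℝ)
    (x x₁ x₂ x₁₂ B B₁ B₂ B₁₂ w w₁ w₂ w₁₂ : ℝ)
    (h : x * B = w) (h1 : x₁ * B₁ = w₁) (h2 : x₂ * B₂ = w₂)
    (h12 : x₁₂ * B₁₂ = w₁₂) :
    Qplus a₁ a₂ α₁ α₂ β₁ β₂ γ₁ γ₂ ξ₁ ξ₂ ξ₃ ξ₄ ζ x x₁ x₂ x₁₂ *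
        (B * B₁ * B₂ * B₁₂) =
      a₁ * (w * (B₁ * B₂ * B₁₂) + w₁₂ * (B * B₁ * B₂)) +
      a₂ * (w₁ * (B * B₂ * B₁₂) + w₂ * (B * B₁ * B₁₂)) +
      (α₁ - α₂) * w * w₁ * (B₂ * B₁₂) + (α₁ + α₂) * w₂ * w₁₂ * (B * B₁) +
      (β₁ - β₂) * w * w₂ * (B₁ * B₁₂) + (β₁ + β₂) * w₁ * w₁₂ * (B * B₂) +
      γ₁ * w * w₁₂ * (B₁ * B₂) + γ₂ * w₁ * w₂ * (B * B₁₂) +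
      (ξ₁ - ξ₃) * w * w₁ * w₂ * B₁₂ + (ξ₁ + ξ₃) * w * w₁ * w₁₂ * B₂ +
      (ξ₂ - ξ₄) * w₁ * w₂ * w₁₂ * B + (ξ₂ + ξ₄) * w * w₂ * w₁₂ * B₁ +
      ζ * w * w₁ * w₂ * w₁₂ := by
  subst h h1 h2 h12
  unfold Qplus
  ring

set_option maxHeartbeats 1000000 in
/-- Under the restricted Möbius transformation `u ↦ u/(Cu+D)`, the quad
polynomial `Q₊`, after clearing denominators, becomes the polynomial `Q₊'`
of the same form with the transformed coefficients: the class of equations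
`Q₊ = 0` is invariant under restricted Möbius transformations. -/
theorem Qplus_moebius_invariance
    (a₁ a₂ α₁ α₂ β₁ β₂ γ₁ γ₂ ξ₁ ξ₂ ξ₃ ξ₄ ζ : ℝ)
    (C D : ℝ) (hD : D ≠ 0) :
    ∀ w w₁ w₂ w₁₂ : ℝ,
      C * w + D ≠ 0 → C * w₁ + D ≠ 0 → C * w₂ + D ≠ 0 → C * w₁₂ + D ≠ 0 →
      Qplus a₁ a₂ α₁ α₂ β₁ β₂ γ₁ γ₂ ξ₁ ξ₂ ξ₃ ξ₄ ζ
          (w / (C * w + D)) (w₁ / (C * w₁ + D))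
          (w₂ / (C * w₂ + D)) (w₁₂ / (C * w₁₂ + D)) *
        ((C * w + D) * (C * w₁ + D) * (C * w₂ + D) * (C * w₁₂ + D)) =
      Qplus (D ^ 3 * a₁) (D ^ 3 * a₂)
          (D ^ 2 * (α₁ + C * (a₁ + a₂))) (D ^ 2 * α₂)
          (D ^ 2 * (β₁ + C * (a₁ + a₂))) (D ^ 2 * β₂)
          (D ^ 2 * (γ₁ + 2 * C * a₁)) (D ^ 2 * (γ₂ + 2 * C * a₂))
          (D * ξ₁ + 1 / 2 * C * D *
            (3 * C * (a₁ + a₂) + γ₁ + γ₂ + 2 * (α₁ - α₂ + β₁)))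
          (D * ξ₂ + 1 / 2 * C * D *
            (3 * C * (a₁ + a₂) + γ₁ + γ₂ + 2 * (α₁ + α₂ + β₁)))
          (D * ξ₃ + 1 / 2 * C * D *
            (C * (a₁ - a₂) + γ₁ - γ₂ + 2 * β₂))
          (D * ξ₄ + 1 / 2 * C * D *
            (C * (a₁ - a₂) + γ₁ - γ₂ - 2 * β₂))
          (ζ + C ^ 2 * (2 * C * (a₁ + a₂) + γ₁ + γ₂ + 2 * (α₁ + β₁)) +
            2 * C * (ξ₁ + ξ₂))
          w w₁ w₂ w₁₂ := by
  intro w w₁ w₂ w₁₂ h h1 h2 h12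
  rw [Qplus_clear a₁ a₂ α₁ α₂ β₁ β₂ γ₁ γ₂ ξ₁ ξ₂ ξ₃ ξ₄ ζ
    _ _ _ _ _ _ _ _ w w₁ w₂ w₁₂
    (div_mul_cancel₀ w h) (div_mul_cancel₀ w₁ h1)
    (div_mul_cancel₀ w₂ h2) (div_mul_cancel₀ w₁₂ h12)]
  unfold Qplus
  ring
end

section
/- Let a₁, a₂, α₁, α₂, β₁, β₂, γ₁, γ₂, ξ₁, ξ₂, ξ₃, ξ₄ be real numbers with a₁ ≠ 0, a₂ ≠ 0, a₁² ≠ a₂², satisfying the case L1 conditions. Let C, D ∈ ℝ with D ≠ 0 and define the transformed coefficients a₁' = D³a₁, a₂' = D³a₂, α₁' = D²(α₁ + C(a₁+a₂)), α₂' = D²α₂, β₁' = D²(β₁ + C(a₁+a₂)), β₂' = D²β₂, γ₁' = D²(γ₁ + 2Ca₁), γ₂' = D²(γ₂ + 2Ca₂), ξ₁' = Dξ₁ + (1/2)CD[3C(a₁+a₂) + γ₁ + γ₂ + 2(α₁ − α₂ + β₁)], ξ₂' = Dξ₂ + (1/2)CD[3C(a₁+a₂) + γ₁ + γ₂ + 2(α₁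 + α₂ + β₁)], ξ₃' = Dξ₃ + (1/2)CD[C(a₁−a₂) + γ₁ − γ₂ + 2β₂], ξ₄' = Dξ₄ + (1/2)CD[C(a₁−a₂) + γ₁ − γ₂ − 2β₂]. Then the primed coefficients again satisfy the case L1 conditions. Thus the subclass L1 is invariant under restricted Möbius transformations u ↦ u/(Cu+D). -/
/-- The case L1 linearizability conditions for the quad-equation `Q₊`. -/
def CaseL1 (a₁ a₂ α₁ α₂ β₁ β₂ γ₁ γ₂ ξ₁ ξ₂ ξ₃ ξ₄ : ℝ) : Prop :=
  α₂ = 0 ∧ β₂ = 0 ∧ α₁ = β₁ ∧ γ₁ + γ₂ = 2 * β₁ ∧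
  ξ₁ = ξ₂ ∧
  ξ₁ = ((a₁ + a₂) ^ 2 * γ₁ * γ₂ + (3 * a₁ - 2 * a₂) * a₂ * γ₁ * β₁ -
      a₁ * (2 * a₁ - 3 * a₂) * γ₂ * β₁) / (4 * a₁ * a₂ * (a₁ + a₂)) ∧
  ξ₃ = ξ₄ ∧
  ξ₃ = (-(a₁ - a₂) * (a₁ + a₂) ^ 2 * γ₁ * γ₂ -
      a₂ * (-a₁ ^ 2 - 5 * a₂ * a₁ + 2 * a₂ ^ 2) * γ₁ * β₁ +
      a₁ * (2 * a₁ ^ 2 - 5 * a₂ * a₁ - a₂ ^ 2) * γ₂ * β₁) /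
      (4 * a₁ * a₂ * (a₁ + a₂) ^ 2)

/-- The subclass L1 is invariant under the restricted Möbius transformations
`u ↦ u/(Cu+D)`, acting on the coefficients of `Q₊` in the standard way. -/
theorem caseL1_moebius_invariant
    (a₁ a₂ α₁ α₂ β₁ β₂ γ₁ γ₂ ξ₁ ξ₂ ξ₃ ξ₄ : ℝ)
    (ha₁ : a₁ ≠ 0) (ha₂ : a₂ ≠ 0) (ha : a₁ ^ 2 ≠ a₂ ^ 2)
    (hcase : CaseL1 a₁ a₂ α₁ α₂ β₁ β₂ γ₁ γ₂ ξ₁ ξ₂ ξ₃ ξ₄)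
    (C D : ℝ) (hD : D ≠ 0) :
    CaseL1
        (D ^ 3 * a₁) (D ^ 3 * a₂)
        (D ^ 2 * (α₁ + C * (a₁ + a₂))) (D ^ 2 * α₂)
        (D ^ 2 * (β₁ + C * (a₁ + a₂))) (D ^ 2 * β₂)
        (D ^ 2 * (γ₁ + 2 * C * a₁)) (D ^ 2 * (γ₂ + 2 * C * a₂))
        (D * ξ₁ + 1 / 2 * C * D *
          (3 * C * (a₁ + a₂) + γ₁ + γ₂ + 2 * (α₁ - α₂ + β₁)))
        (D * ξ₂ + 1 / 2 * C * D *
          (3 * C * (a₁ + a₂) + γ₁ + γ₂ + 2 * (α₁ + α₂ + β₁)))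
        (D * ξ₃ + 1 / 2 * C * D * (C * (a₁ - a₂) + γ₁ - γ₂ + 2 * β₂))
        (D * ξ₄ + 1 / 2 * C * D * (C * (a₁ - a₂) + γ₁ - γ₂ - 2 * β₂)) := by
  obtain ⟨h1, h2, h3, h4, h5, h6, h7, h8⟩ := hcase
  have hsum : a₁ + a₂ ≠ 0 := by
    intro h
    apply ha
    have : a₁ = -a₂ := by linarith
    rw [this]; ring
  have hg : γ₂ = 2 * β₁ - γ₁ := by linarith
  have hsum' : D ^ 3 * a₁ + D ^ 3 * a₂ ≠ 0 := by
    rw [← mul_add]; exact mul_ne_zero (pow_ne_zero 3 hD) hsum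
  subst h1 h2 h3 h5 h7 h6 h8 hg
  refine ⟨by ring, by ring, by ring, by ring, by ring, ?_, by ring, ?_⟩
  · field_simp
    ring
  · field_simp
    ring
end

section
/- Let ε ∈ {1, −1} and let a₂, β₁ ∈ ℝ with a₂ ≠ 0. Set a₁ := (1/4)(7 + ε√33)·a₂, α₂ := 0, β₂ := 0, α₁ := β₁, γ₁ := (1 − ε√(3/11))·β₁, γ₂ := (1 + ε√(3/11))·β₁, and ξ₁ := ξ₂ := ξ₃ := ξ₄ := 0 (the cases QL1a, QL1b). Then a₁ ≠ 0, a₁² ≠ a₂², 2a₁² − 7a₂a₁ + 2a₂² = 0, and these coefficients satisfy the case L1 conditions; in particular γ₁ + γ₂ = 2β₁, [(a₁+a₂)²γ₁γ₂ + (3a₁−2a₂)a₂γ₁β₁ − a₁(2a₁−3a₂)γ₂β₁] / (4a₁a₂(a₁+a₂)) = 0, and [−(a₁−a₂)(a₁+a₂)²γ₁γ₂ − a₂(−a₁²−5a₂a₁+2a₂²)γ₁β₁ + a₁(2a₁²−5a₂a₁−a₂²)γ₂β₁] / (4a₁a₂(a₁+a₂)²) = 0. -/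
/-- The cases QL1a, QL1b: with `a₁ = (7 ± √33)a₂/4`, `α₂ = β₂ = 0`,
`α₁ = β₁`, `γ₁ = (1 ∓ √(3/11))β₁`, `γ₂ = (1 ± √(3/11))β₁` and
`ξ₁ = ξ₂ = ξ₃ = ξ₄ = 0`, one has `a₁ ≠ 0`, `a₁² ≠ a₂²`,
`2a₁² − 7a₂a₁ + 2a₂² = 0`, and the case L1 conditions hold; in particular
`γ₁ + γ₂ = 2β₁` and the two L1 expressions for `ξ₁` and `ξ₃` vanish. -/
theorem casesQL1_satisfy_L1
    (ε : ℝ) (hε : ε = 1 ∨ ε = -1) (a₂ β₁ : ℝ) (ha₂ : a₂ ≠ 0)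
    (a₁ α₁ α₂ β₂ γ₁ γ₂ : ℝ)
    (ha₁ : a₁ = 1 / 4 * (7 + ε * Real.sqrt 33) * a₂)
    (hα₂ : α₂ = 0) (hβ₂ : β₂ = 0) (hα₁ : α₁ = β₁)
    (hγ₁ : γ₁ = (1 - ε * Real.sqrt (3 / 11)) * β₁)
    (hγ₂ : γ₂ = (1 + ε * Real.sqrt (3 / 11)) * β₁) :
    a₁ ≠ 0 ∧ a₁ ^ 2 ≠ a₂ ^ 2 ∧
    2 * a₁ ^ 2 - 7 * a₂ * a₁ + 2 * a₂ ^ 2 = 0 ∧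
    CaseL1 a₁ a₂ α₁ α₂ β₁ β₂ γ₁ γ₂ 0 0 0 0 ∧
    γ₁ + γ₂ = 2 * β₁ ∧
    ((a₁ + a₂) ^ 2 * γ₁ * γ₂ + (3 * a₁ - 2 * a₂) * a₂ * γ₁ * β₁ -
        a₁ * (2 * a₁ - 3 * a₂) * γ₂ * β₁) / (4 * a₁ * a₂ * (a₁ + a₂)) = 0 ∧
    (-(a₁ - a₂) * (a₁ + a₂) ^ 2 * γ₁ * γ₂ -
        a₂ * (-a₁ ^ 2 - 5 * a₂ * a₁ + 2 * a₂ ^ 2) * γ₁ * β₁ +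
        a₁ * (2 * a₁ ^ 2 - 5 * a₂ * a₁ - a₂ ^ 2) * γ₂ * β₁) /
        (4 * a₁ * a₂ * (a₁ + a₂) ^ 2) = 0 := by

  have hs : Real.sqrt (3 / 11) ^ 2 = 3 / 11 := Real.sq_sqrt (by norm_num)
  have h33 : Real.sqrt 33 = 11 * Real.sqrt (3 / 11) := by
    rw [show (33 : ℝ) = 11 ^ 2 * (3 / 11) by norm_num,
      Real.sqrt_mul (by norm_num), Real.sqrt_sq (by norm_num)]
  have hv : (ε * Real.sqrt (3 / 11)) ^ 2 = 3 / 11 := by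
    rcases hε with h | h <;> rw [h] <;> rw [mul_pow] <;> rw [hs] <;> norm_num
  rw [h33] at ha₁
  subst ha₁ hα₂ hβ₂ hγ₁ hγ₂
  set v : ℝ := ε * Real.sqrt (3 / 11) with hvdef
  have h7 : 7 + 11 * v ≠ 0 := by
    intro h
    have hv7 : v = -7 / 11 := by linarith
    rw [hv7] at hv; norm_num at hv
  have hN1 : ((1 / 4 * (7 + ε * (11 * Real.sqrt (3 / 11))) * a₂ + a₂) ^ 2 *
        ((1 - v) * β₁) * ((1 + v) * β₁) +
      (3 * (1 / 4 * (7 + ε * (11 * Real.sqrt (3 / 11))) * a₂) - 2 * a₂) * a₂ *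
        ((1 - v) * β₁) * β₁ -
      1 / 4 * (7 + ε * (11 * Real.sqrt (3 / 11))) * a₂ *
        (2 * (1 / 4 * (7 + ε * (11 * Real.sqrt (3 / 11))) * a₂) - 3 * a₂) *
        ((1 + v) * β₁) * β₁) = 0 := by
    linear_combination (a₂ ^ 2 * β₁ ^ 2 * (-121 * v ^ 2 - 484 * v - 583) / 16) * hv
  have hN2 : (-(1 / 4 * (7 + ε * (11 * Real.sqrt (3 / 11))) * a₂ - a₂) *
        (1 / 4 * (7 + ε * (11 * Real.sqrt (3 / 11))) * a₂ + a₂) ^ 2 *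
        ((1 - v) * β₁) * ((1 + v) * β₁) -
      a₂ * (-(1 / 4 * (7 + ε * (11 * Real.sqrt (3 / 11))) * a₂) ^ 2 -
          5 * a₂ * (1 / 4 * (7 + ε * (11 * Real.sqrt (3 / 11))) * a₂) + 2 * a₂ ^ 2) *
        ((1 - v) * β₁) * β₁ +
      1 / 4 * (7 + ε * (11 * Real.sqrt (3 / 11))) * a₂ *
        (2 * (1 / 4 * (7 + ε * (11 * Real.sqrt (3 / 11))) * a₂) ^ 2 -
          5 * a₂ * (1 / 4 * (7 + ε * (11 * Real.sqrt (3 / 11))) * a₂) - a₂ ^ 2) *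
        ((1 + v) * β₁) * β₁) = 0 := by
    linear_combination (a₂ ^ 3 * β₁ ^ 2 *
      (1331 * v ^ 3 + 5687 * v ^ 2 + 5929 * v + 517) / 64) * hv
  refine ⟨?_, ?_, ?_, ⟨rfl, rfl, hα₁, by ring, rfl, ?_, rfl, ?_⟩, by ring, ?_, ?_⟩
  · intro h
    apply h7
    have : (7 + 11 * v) * a₂ = 0 := by linear_combination 4 * h
    rcases mul_eq_zero.mp this with h1 | h1
    · exact h1
    · exact absurd h1 ha₂
  · intro h
    have key : (66 + 154 * v) * a₂ ^ 2 = 0 := by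
      linear_combination 16 * h - 121 * a₂ ^ 2 * hv
    rcases mul_eq_zero.mp key with h1 | h1
    · have hv3 : v = -3 / 7 := by linarith
      rw [hv3] at hv; norm_num at hv
    · exact ha₂ (pow_eq_zero_iff (by norm_num) |>.mp h1)
  · linear_combination (121 * a₂ ^ 2 / 8) * hv
  · rw [hN1, zero_div]
  · rw [hN2, zero_div]
  · rw [hN1, zero_div]
  · rw [hN2, zero_div]
end

section
/- Let a₁, a₂, γ₁ be real numbers with a₁ ≠ 0, a₂ ≠ 0, a₁² ≠ a₂², and define the coefficients of the quad-equation Q₊ by the A₃ C-integrability conditions (cc): α₁ = β₁ = (a₁+a₂)γ₁/(2a₁), α₂ = β₂ = 0, γ₂ = a₂γ₁/a₁, ξ₁ = ξ₂ = 3(a₁+a₂)γ₁²/(8a₁²), ξ₃ = ξ₄ = (a₁−a₂)γ₁²/(8a₁²). Then these coefficients satisfy both the case L1 conditions and the case L2 conditions, i.e. the A₃ C-integrable case (cc) lies in the intersection of the classes L1 and L2. -/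
/-- The case L2 linearizability conditions for the quad-equation `Q₊`. -/
def CaseL2 (a₁ a₂ α₁ α₂ β₁ β₂ γ₁ γ₂ ξ₁ ξ₂ ξ₃ ξ₄ : ℝ) : Prop :=
  α₂ = 0 ∧ β₂ = 0 ∧ α₁ = β₁ ∧
  (3 * a₁ - 2 * a₂) * a₂ ^ 2 * γ₁ + a₁ ^ 2 * (2 * a₁ - 3 * a₂) * γ₂ =
    4 * a₁ * (a₁ - a₂) * a₂ * β₁ ∧
  ξ₁ = ξ₂ ∧
  ξ₁ = ((a₁ + a₂) * (a₂ ^ 2 * γ₁ ^ 2 - a₁ ^ 2 * γ₂ ^ 2) +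
      2 * a₂ * (a₁ ^ 2 - 2 * a₂ ^ 2) * γ₁ * β₁ +
      2 * a₁ * (2 * a₁ ^ 2 - a₂ ^ 2) * γ₂ * β₁ -
      6 * a₁ * (a₁ - a₂) * a₂ * β₁ ^ 2) / (4 * a₁ * a₂ * (a₁ ^ 2 - a₂ ^ 2)) ∧
  ξ₃ = ξ₄ ∧
  ξ₃ = (2 * a₁ * a₂ * (a₁ + a₂) * (γ₁ - γ₂) * β₁ +
      (a₁ - a₂) * (a₂ * γ₁ - a₁ * γ₂) ^ 2 +
      2 * a₁ * a₂ * (a₂ - a₁) * β₁ ^ 2) / (4 * a₁ * a₂ * (a₁ + a₂) ^ 2)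

/-- The A₃ C-integrable case (cc), given by
`α₁ = β₁ = (a₁+a₂)γ₁/(2a₁)`, `α₂ = β₂ = 0`, `γ₂ = a₂γ₁/a₁`,
`ξ₁ = ξ₂ = 3(a₁+a₂)γ₁²/(8a₁²)`, `ξ₃ = ξ₄ = (a₁−a₂)γ₁²/(8a₁²)`,
lies in the intersection of the classes L1 and L2. -/
theorem ccCase_in_L1_inter_L2
    (a₁ a₂ γ₁ : ℝ) (ha₁ : a₁ ≠ 0) (ha₂ : a₂ ≠ 0) (ha : a₁ ^ 2 ≠ a₂ ^ 2)
    (α₁ α₂ β₁ β₂ γ₂ ξ₁ ξ₂ ξ₃ ξ₄ : ℝ)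
    (hα₁ : α₁ = (a₁ + a₂) * γ₁ / (2 * a₁)) (hβ₁ : β₁ = (a₁ + a₂) * γ₁ / (2 * a₁))
    (hα₂ : α₂ = 0) (hβ₂ : β₂ = 0) (hγ₂ : γ₂ = a₂ * γ₁ / a₁)
    (hξ₁ : ξ₁ = 3 * (a₁ + a₂) * γ₁ ^ 2 / (8 * a₁ ^ 2))
    (hξ₂ : ξ₂ = 3 * (a₁ + a₂) * γ₁ ^ 2 / (8 * a₁ ^ 2))
    (hξ₃ : ξ₃ = (a₁ - a₂) * γ₁ ^ 2 / (8 * a₁ ^ 2))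
    (hξ₄ : ξ₄ = (a₁ - a₂) * γ₁ ^ 2 / (8 * a₁ ^ 2)) :
    CaseL1 a₁ a₂ α₁ α₂ β₁ β₂ γ₁ γ₂ ξ₁ ξ₂ ξ₃ ξ₄ ∧
    CaseL2 a₁ a₂ α₁ α₂ β₁ β₂ γ₁ γ₂ ξ₁ ξ₂ ξ₃ ξ₄ := by
  have hsum : a₁ + a₂ ≠ 0 := fun h => ha (by rw [show a₁ = -a₂ by linarith]; ring)
  have hdiff : a₁ - a₂ ≠ 0 := fun h => ha (by rw [show a₁ = a₂ by linarith])
  have hsq : a₁ ^ 2 - a₂ ^ 2 ≠ 0 := sub_ne_zero.mpr ha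
  subst hα₁ hβ₁ hα₂ hβ₂ hγ₂ hξ₁ hξ₂ hξ₃ hξ₄
  refine ⟨⟨rfl, rfl, rfl, by field_simp, rfl, by field_simp; ring, rfl, by field_simp; ring⟩,
    ⟨rfl, rfl, rfl, by field_simp; ring, rfl, by field_simp; ring, rfl, by field_simp; ring⟩⟩
end

section
/- Let a₁, a₂, γ₁ be real numbers with a₁ ≠ 0, a₂ ≠ 0, a₁² ≠ a₂². Define the coefficients of Q₊ by the A₃ C-integrability conditions (cc) together with ζ = (a₁+a₂)γ₁³/(4a₁³). Let α, δ ∈ ℝ with α ≠ 0 and δ ≠ 0, and set γ := −αγ₁/(2a₁). Then for all v, v₁, v₂, v₁₂ ∈ ℝ with γv+δ ≠ 0, γv₁+δ ≠ 0, γv₂+δ ≠ 0, γv₁₂+δ ≠ 0, setting u := αv/(γv+δ), u₁ := αv₁/(γv₁+δ), u₂ := αv₂/(γv₂+δ), u₁₂ := αv₁₂/(γv₁₂+δ), one has Q₊(u, u₁, u₂, u₁₂) = 0 if and only if v + v₁₂ + (a₂/a₁)(v₁ + v₂) = 0. That is, the Möbius transformation u = αv/(γv+δ) linearizes the equation Q₊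 = 0 to the linear dispersive equation v_{n,m} + v_{n+1,m+1} + (a₂/a₁)(v_{n+1,m} + v_{n,m+1}) = 0. -/
set_option maxHeartbeats 1000000 in
/-- The quad-equation `Q₊` with coefficients given by the A₃
C-integrability conditions (cc) and `ζ = (a₁+a₂)γ₁³/(4a₁³)` is linearized by
the Möbius transformation `u = αv/(γv+δ)` with `γ = −αγ₁/(2a₁)`: on the
Möbius images, `Q₊ = 0` holds iff `v + v₁₂ + (a₂/a₁)(v₁ + v₂) = 0`. -/
theorem cc_with_zeta_linearizable
    (a₁ a₂ γ₁ : ℝ) (ha₁ : a₁ ≠ 0) (ha₂ : a₂ ≠ 0) (ha : a₁ ^ 2 ≠ a₂ ^ 2)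
    (α δ : ℝ) (hα : α ≠ 0) (hδ : δ ≠ 0)
    (γ : ℝ) (hγ : γ = -(α * γ₁) / (2 * a₁)) :
    ∀ v v₁ v₂ v₁₂ : ℝ,
      γ * v + δ ≠ 0 → γ * v₁ + δ ≠ 0 → γ * v₂ + δ ≠ 0 → γ * v₁₂ + δ ≠ 0 →
      (Qplus a₁ a₂
          ((a₁ + a₂) * γ₁ / (2 * a₁)) 0
          ((a₁ + a₂) * γ₁ / (2 * a₁)) 0
          γ₁ (a₂ * γ₁ / a₁)
          (3 * (a₁ + a₂) * γ₁ ^ 2 / (8 * a₁ ^ 2))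
          (3 * (a₁ + a₂) * γ₁ ^ 2 / (8 * a₁ ^ 2))
          ((a₁ - a₂) * γ₁ ^ 2 / (8 * a₁ ^ 2))
          ((a₁ - a₂) * γ₁ ^ 2 / (8 * a₁ ^ 2))
          ((a₁ + a₂) * γ₁ ^ 3 / (4 * a₁ ^ 3))
          (α * v / (γ * v + δ)) (α * v₁ / (γ * v₁ + δ))
          (α * v₂ / (γ * v₂ + δ)) (α * v₁₂ / (γ * v₁₂ + δ)) = 0 ↔
        v + v₁₂ + a₂ / a₁ * (v₁ + v₂) = 0) := by
  subst hγ
  intro v v₁ v₂ v₁₂ h h1 h2 h12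
  set γ : ℝ := -(α * γ₁) / (2 * a₁) with hγ
  set d : ℝ := γ * v + δ with hd
  set d₁ : ℝ := γ * v₁ + δ with hd₁
  set d₂ : ℝ := γ * v₂ + δ with hd₂
  set d₁₂ : ℝ := γ * v₁₂ + δ with hd₁₂
  have hw : α * v = α * v / d * d := (div_mul_cancel₀ _ h).symm
  have hw1 : α * v₁ = α * v₁ / d₁ * d₁ := (div_mul_cancel₀ _ h1).symm
  have hw2 : α * v₂ = α * v₂ / d₂ * d₂ := (div_mul_cancel₀ _ h2).symm
  have hw12 : α * v₁₂ = α * v₁₂ / d₁₂ * d₁₂ := (div_mul_cancel₀ _ h12).symm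
  set A : ℝ := (a₁ + a₂) * γ₁ / (2 * a₁) with hA
  set G : ℝ := a₂ * γ₁ / a₁ with hG
  set X : ℝ := 3 * (a₁ + a₂) * γ₁ ^ 2 / (8 * a₁ ^ 2) with hX
  set Y : ℝ := (a₁ - a₂) * γ₁ ^ 2 / (8 * a₁ ^ 2) with hY
  set Z : ℝ := (a₁ + a₂) * γ₁ ^ 3 / (4 * a₁ ^ 3) with hZ
  set c : ℝ := γ₁ / (2 * a₁) with hc
  have hγ₁ : γ₁ = 2 * a₁ * c := by rw [hc]; field_simp
  have hA' : A = (a₁ + a₂) * c := by rw [hA, hγ₁]; field_simp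
  have hG' : G = 2 * a₂ * c := by rw [hG, hγ₁]; field_simp
  have hX' : X = 3 / 2 * (a₁ + a₂) * c ^ 2 := by
    rw [hX, hγ₁]; field_simp; ring
  have hY' : Y = 1 / 2 * (a₁ - a₂) * c ^ 2 := by
    rw [hY, hγ₁]; field_simp; ring
  have hZ' : Z = 2 * (a₁ + a₂) * c ^ 3 := by
    rw [hZ, hγ₁]; field_simp; ring
  have hγ' : γ = -(α * c) := by rw [hγ, hγ₁]; field_simp
  have key : Qplus a₁ a₂ A 0 A 0 γ₁ G X X Y Y Z
        (α * v / d) (α * v₁ / d₁) (α * v₂ / d₂) (α * v₁₂ / d₁₂) *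
        (d * d₁ * d₂ * d₁₂) =
      a₁ * ((α * v) * (d₁ * d₂ * d₁₂) + (α * v₁₂) * (d * d₁ * d₂)) +
        a₂ * ((α * v₁) * (d * d₂ * d₁₂) + (α * v₂) * (d * d₁ * d₁₂)) +
        (A - 0) * (α * v) * (α * v₁) * (d₂ * d₁₂) +
        (A + 0) * (α * v₂) * (α * v₁₂) * (d * d₁) +
        (A - 0) * (α * v) * (α * v₂) * (d₁ * d₁₂) +
        (A + 0) * (α * v₁) * (α * v₁₂) * (d * d₂) +
        γ₁ * (α * v) * (α * v₁₂) * (d₁ * d₂) +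
        G * (α * v₁) * (α * v₂) * (d * d₁₂) +
        (X - Y) * (α * v) * (α * v₁) * (α * v₂) * d₁₂ +
        (X + Y) * (α * v) * (α * v₁) * (α * v₁₂) * d₂ +
        (X - Y) * (α * v₁) * (α * v₂) * (α * v₁₂) * d +
        (X + Y) * (α * v) * (α * v₂) * (α * v₁₂) * d₁ +
        Z * (α * v) * (α * v₁) * (α * v₂) * (α * v₁₂) := by
    conv_rhs => rw [hw, hw1, hw2, hw12]
    unfold Qplus
    ring
  have key2 : Qplus a₁ a₂ A 0 A 0 γ₁ G X X Y Y Z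
        (α * v / d) (α * v₁ / d₁) (α * v₂ / d₂) (α * v₁₂ / d₁₂) *
        (d * d₁ * d₂ * d₁₂) =
      α * δ ^ 3 * (a₁ * (v + v₁₂) + a₂ * (v₁ + v₂)) := by
    rw [key, hA', hG', hX', hY', hZ', hγ₁, hd, hd₁, hd₂, hd₁₂, hγ']
    ring
  have hprod : d * d₁ * d₂ * d₁₂ ≠ 0 :=
    mul_ne_zero (mul_ne_zero (mul_ne_zero h h1) h2) h12
  constructor
  · intro hQ
    rw [hQ, zero_mul] at key2
    have h3 : a₁ * (v + v₁₂) + a₂ * (v₁ + v₂) = 0 := by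
      rcases mul_eq_zero.mp key2.symm with h' | h'
      · exact absurd h' (mul_ne_zero hα (pow_ne_zero 3 hδ))
      · exact h'
    field_simp
    linarith
  · intro hv
    have h3 : a₁ * (v + v₁₂) + a₂ * (v₁ + v₂) = 0 := by
      have h4 : a₁ * (v + v₁₂ + a₂ / a₁ * (v₁ + v₂)) = 0 := by rw [hv]; ring
      field_simp at h4
      linarith
    rw [h3, mul_zero] at key2
    exact (mul_eq_zero.mp key2).resolve_right hprod
end

section
/- Let a₁, a₂, γ₁ be real numbers with a₁ ≠ 0, a₂ ≠ 0, a₁² ≠ a₂², γ₁ ≠ 0, and let ζ ∈ ℝ. Define the coefficients of Q₊ by the A₃ C-integrability conditions (cc) together with this ζ. Suppose there exist real numbers α, β, γ, δ with αδ − βγ ≠ 0 and a real constant c ≠ 0 such that for all v, v₁, v₂, v₁₂ ∈ ℝ with γv+δ ≠ 0, γv₁+δ ≠ 0, γv₂+δ ≠ 0, γv₁₂+δ ≠ 0, one has Q₊((αv+β)/(γv+δ), (αv₁+β)/(γv₁+δ), (αv₂+β)/(γv₂+δ), (αv₁₂+β)/(γv₁₂+δ))·(γv+δ)(γv₁+δ)(γv₂+δ)(γv₁₂+δ)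 = c·[v + v₁₂ + (a₂/a₁)(v₁ + v₂)], i.e. the real Möbius transformation u = (αv+β)/(γv+δ) linearizes Q₊ = 0 to the linear equation v_{n,m} + v_{n+1,m+1} + (a₂/a₁)(v_{n+1,m} + v_{n,m+1}) = 0. Then necessarily ζ = (a₁+a₂)γ₁³/(4a₁³), β = 0, and γ = −αγ₁/(2a₁). -/
/-- Cleared-denominator polynomial form of `8 a₁² · Q₊(cc) ∘ Möbius · ∏(γ v_i + δ)`. -/
def Pcl (a1 a2 g1 z al be ga de : ℝ) (v v1 v2 v12 : ℝ) : ℝ :=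
  8*a1^3*((al*v+be)*(ga*v1+de)*(ga*v2+de)*(ga*v12+de)
          + (ga*v+de)*(ga*v1+de)*(ga*v2+de)*(al*v12+be))
  + 8*a1^2*a2*((ga*v+de)*(al*v1+be)*(ga*v2+de)*(ga*v12+de)
          + (ga*v+de)*(ga*v1+de)*(al*v2+be)*(ga*v12+de))
  + 4*a1*(a1+a2)*g1*((al*v+be)*(al*v1+be)*(ga*v2+de)*(ga*v12+de)
          + (ga*v+de)*(ga*v1+de)*(al*v2+be)*(al*v12+be)
          + (al*v+be)*(ga*v1+de)*(al*v2+be)*(ga*v12+de)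
          + (ga*v+de)*(al*v1+be)*(ga*v2+de)*(al*v12+be))
  + 8*a1^2*g1*((al*v+be)*(ga*v1+de)*(ga*v2+de)*(al*v12+be))
  + 8*a1*a2*g1*((ga*v+de)*(al*v1+be)*(al*v2+be)*(ga*v12+de))
  + (2*a1+4*a2)*g1^2*((al*v+be)*(al*v1+be)*(al*v2+be)*(ga*v12+de)
          + (ga*v+de)*(al*v1+be)*(al*v2+be)*(al*v12+be))
  + (4*a1+2*a2)*g1^2*((al*v+be)*(al*v1+be)*(ga*v2+de)*(al*v12+be)
          + (al*v+be)*(ga*v1+de)*(al*v2+be)*(al*v12+be))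
  + 8*a1^2*z*((al*v+be)*(al*v1+be)*(al*v2+be)*(al*v12+be))

/-- Extension of an identity off a nontrivial affine hyperplane by continuity. -/
lemma ext_aux {f g : ℝ → ℝ} (hf : Continuous f) (hg : Continuous g)
    {p q : ℝ} (hpq : p ≠ 0 ∨ q ≠ 0)
    (h : ∀ x, p * x + q ≠ 0 → f x = g x) : ∀ x, f x = g x := by
  have hdense : Dense {x : ℝ | p * x + q ≠ 0} := by
    rcases eq_or_ne p 0 with hp | hp
    · have hq : q ≠ 0 := hpq.resolve_left (fun h' => h' hp)
      have : {x : ℝ | p * x + q ≠ 0} = Set.univ := by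
        ext x; simp [hp, hq]
      rw [this]; exact dense_univ
    · have : {x : ℝ | p * x + q ≠ 0} = {-q / p}ᶜ := by
        ext x
        simp only [Set.mem_setOf_eq, Set.mem_compl_iff, Set.mem_singleton_iff]
        constructor
        · intro hx hxx
          apply hx; rw [hxx]; field_simp; ring
        · intro hx hcon
          apply hx
          field_simp
          linarith
      rw [this]; exact dense_compl_singleton _
  have heq : f = g := Continuous.ext_on hdense hf hg (fun x hx => h x hx)
  exact fun x => congrFun heq x

set_option maxHeartbeats 4000000 in
set_option maxRecDepth 10000 in
/-- If the quad-equation `Q₊` with coefficients given by the A₃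
C-integrability conditions (cc) (with `γ₁ ≠ 0`) and quartic coefficient `ζ`
is linearized by a real Möbius transformation `u = (αv+β)/(γv+δ)` to the
linear equation `v + v₁₂ + (a₂/a₁)(v₁+v₂) = 0`, then necessarily
`ζ = (a₁+a₂)γ₁³/(4a₁³)`, `β = 0` and `γ = −αγ₁/(2a₁)`. -/
theorem cc_linearizing_moebius_necessary_form
    (a₁ a₂ γ₁ : ℝ) (ha₁ : a₁ ≠ 0) (ha₂ : a₂ ≠ 0) (ha : a₁ ^ 2 ≠ a₂ ^ 2)
    (hγ₁ : γ₁ ≠ 0) (ζ : ℝ)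
    (α β γ δ c : ℝ) (hdet : α * δ - β * γ ≠ 0) (hc : c ≠ 0)
    (hlin : ∀ v v₁ v₂ v₁₂ : ℝ,
      γ * v + δ ≠ 0 → γ * v₁ + δ ≠ 0 → γ * v₂ + δ ≠ 0 → γ * v₁₂ + δ ≠ 0 →
      Qplus a₁ a₂
          ((a₁ + a₂) * γ₁ / (2 * a₁)) 0
          ((a₁ + a₂) * γ₁ / (2 * a₁)) 0
          γ₁ (a₂ * γ₁ / a₁)
          (3 * (a₁ + a₂) * γ₁ ^ 2 / (8 * a₁ ^ 2))
          (3 * (a₁ + a₂) * γ₁ ^ 2 / (8 * a₁ ^ 2))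
          ((a₁ - a₂) * γ₁ ^ 2 / (8 * a₁ ^ 2))
          ((a₁ - a₂) * γ₁ ^ 2 / (8 * a₁ ^ 2))
          ζ
          ((α * v + β) / (γ * v + δ)) ((α * v₁ + β) / (γ * v₁ + δ))
          ((α * v₂ + β) / (γ * v₂ + δ)) ((α * v₁₂ + β) / (γ * v₁₂ + δ)) *
        ((γ * v + δ) * (γ * v₁ + δ) * (γ * v₂ + δ) * (γ * v₁₂ + δ)) =
      c * (v + v₁₂ + a₂ / a₁ * (v₁ + v₂))) :
    ζ = (a₁ + a₂) * γ₁ ^ 3 / (4 * a₁ ^ 3) ∧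
    β = 0 ∧ γ = -(α * γ₁) / (2 * a₁) := by
  have hd2 : a₁ ^ 2 - a₂ ^ 2 ≠ 0 := sub_ne_zero.mpr ha
  have hdiff : a₁ - a₂ ≠ 0 := fun h => hd2 (by
    have h2 : a₁ = a₂ := by linarith
    rw [h2]; ring)
  have hsum : a₁ + a₂ ≠ 0 := fun h => hd2 (by
    have h2 : a₁ = -a₂ := by linarith
    rw [h2]; ring)
  have hγor : γ ≠ 0 ∨ δ ≠ 0 := by
    by_contra h
    push_neg at h
    exact hdet (by rw [h.1, h.2]; ring)
  -- cleared-denominator identity on the good set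
  have hgood : ∀ v v1 v2 v12 : ℝ,
      γ * v + δ ≠ 0 → γ * v1 + δ ≠ 0 → γ * v2 + δ ≠ 0 → γ * v12 + δ ≠ 0 →
      Pcl a₁ a₂ γ₁ ζ α β γ δ v v1 v2 v12
        = c * (8 * a₁ ^ 2 * (v + v12) + 8 * a₁ * a₂ * (v1 + v2)) := by
    intro v v1 v2 v12 hB hB1 hB2 hB12
    have h := hlin v v1 v2 v12 hB hB1 hB2 hB12
    have hQid : ∀ u u1 u2 u12 : ℝ, 8 * a₁ ^ 2 *
        Qplus a₁ a₂ ((a₁ + a₂) * γ₁ / (2 * a₁)) 0 ((a₁ + a₂) * γ₁ / (2 * a₁)) 0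
          γ₁ (a₂ * γ₁ / a₁)
          (3 * (a₁ + a₂) * γ₁ ^ 2 / (8 * a₁ ^ 2)) (3 * (a₁ + a₂) * γ₁ ^ 2 / (8 * a₁ ^ 2))
          ((a₁ - a₂) * γ₁ ^ 2 / (8 * a₁ ^ 2)) ((a₁ - a₂) * γ₁ ^ 2 / (8 * a₁ ^ 2)) ζ
          u u1 u2 u12 =
        8*a₁^3*(u+u12) + 8*a₁^2*a₂*(u1+u2)
        + 4*a₁*(a₁+a₂)*γ₁*(u*u1 + u2*u12 + u*u2 + u1*u12)
        + 8*a₁^2*γ₁*(u*u12) + 8*a₁*a₂*γ₁*(u1*u2)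
        + (2*a₁+4*a₂)*γ₁^2*(u*u1*u2 + u1*u2*u12) + (4*a₁+2*a₂)*γ₁^2*(u*u1*u12 + u*u2*u12)
        + 8*a₁^2*ζ*(u*u1*u2*u12) := by
      intro u u1 u2 u12
      unfold Qplus
      field_simp
      ring
    set u := (α * v + β) / (γ * v + δ) with hu
    set u1 := (α * v1 + β) / (γ * v1 + δ) with hu1
    set u2 := (α * v2 + β) / (γ * v2 + δ) with hu2
    set u12 := (α * v12 + β) / (γ * v12 + δ) with hu12
    have e : α * v + β = u * (γ * v + δ) := by rw [hu, div_mul_cancel₀ _ hB]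
    have e1 : α * v1 + β = u1 * (γ * v1 + δ) := by rw [hu1, div_mul_cancel₀ _ hB1]
    have e2 : α * v2 + β = u2 * (γ * v2 + δ) := by rw [hu2, div_mul_cancel₀ _ hB2]
    have e12 : α * v12 + β = u12 * (γ * v12 + δ) := by rw [hu12, div_mul_cancel₀ _ hB12]
    have h4 : 8 * a₁ ^ 2 * (c * (v + v12 + a₂ / a₁ * (v1 + v2)))
        = c * (8 * a₁ ^ 2 * (v + v12) + 8 * a₁ * a₂ * (v1 + v2)) := by
      linear_combination 8 * a₁ * c * (v1 + v2) * (div_mul_cancel₀ a₂ ha₁)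
    have h3 : (8*a₁^3*(u+u12) + 8*a₁^2*a₂*(u1+u2)
        + 4*a₁*(a₁+a₂)*γ₁*(u*u1 + u2*u12 + u*u2 + u1*u12)
        + 8*a₁^2*γ₁*(u*u12) + 8*a₁*a₂*γ₁*(u1*u2)
        + (2*a₁+4*a₂)*γ₁^2*(u*u1*u2 + u1*u2*u12) + (4*a₁+2*a₂)*γ₁^2*(u*u1*u12 + u*u2*u12)
        + 8*a₁^2*ζ*(u*u1*u2*u12))
          * ((γ * v + δ) * (γ * v1 + δ) * (γ * v2 + δ) * (γ * v12 + δ))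
        = c * (8 * a₁ ^ 2 * (v + v12) + 8 * a₁ * a₂ * (v1 + v2)) := by
      rw [← hQid u u1 u2 u12]
      calc 8 * a₁ ^ 2 * Qplus a₁ a₂ ((a₁ + a₂) * γ₁ / (2 * a₁)) 0 ((a₁ + a₂) * γ₁ / (2 * a₁)) 0
            γ₁ (a₂ * γ₁ / a₁)
            (3 * (a₁ + a₂) * γ₁ ^ 2 / (8 * a₁ ^ 2)) (3 * (a₁ + a₂) * γ₁ ^ 2 / (8 * a₁ ^ 2))
            ((a₁ - a₂) * γ₁ ^ 2 / (8 * a₁ ^ 2)) ((a₁ - a₂) * γ₁ ^ 2 / (8 * a₁ ^ 2)) ζ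
            u u1 u2 u12 * ((γ * v + δ) * (γ * v1 + δ) * (γ * v2 + δ) * (γ * v12 + δ))
          = 8 * a₁ ^ 2 * (Qplus a₁ a₂ ((a₁ + a₂) * γ₁ / (2 * a₁)) 0 ((a₁ + a₂) * γ₁ / (2 * a₁)) 0
            γ₁ (a₂ * γ₁ / a₁)
            (3 * (a₁ + a₂) * γ₁ ^ 2 / (8 * a₁ ^ 2)) (3 * (a₁ + a₂) * γ₁ ^ 2 / (8 * a₁ ^ 2))
            ((a₁ - a₂) * γ₁ ^ 2 / (8 * a₁ ^ 2)) ((a₁ - a₂) * γ₁ ^ 2 / (8 * a₁ ^ 2)) ζ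
            u u1 u2 u12 * ((γ * v + δ) * (γ * v1 + δ) * (γ * v2 + δ) * (γ * v12 + δ))) := by
            ring
        _ = 8 * a₁ ^ 2 * (c * (v + v12 + a₂ / a₁ * (v1 + v2))) := by rw [h]
        _ = c * (8 * a₁ ^ 2 * (v + v12) + 8 * a₁ * a₂ * (v1 + v2)) := by rw [h4]
    unfold Pcl
    rw [e, e1, e2, e12]
    rw [← h3]; ring
  -- extend to all values by continuity, one variable at a time
  have key1 : ∀ v v1 v2 : ℝ,
      γ * v + δ ≠ 0 → γ * v1 + δ ≠ 0 → γ * v2 + δ ≠ 0 → ∀ v12,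
      Pcl a₁ a₂ γ₁ ζ α β γ δ v v1 v2 v12
        = c * (8 * a₁ ^ 2 * (v + v12) + 8 * a₁ * a₂ * (v1 + v2)) := by
    intro v v1 v2 h h1 h2
    exact ext_aux (f := fun x => Pcl a₁ a₂ γ₁ ζ α β γ δ v v1 v2 x)
      (g := fun x => c * (8 * a₁ ^ 2 * (v + x) + 8 * a₁ * a₂ * (v1 + v2)))
      (by unfold Pcl; fun_prop) (by fun_prop) hγor
      (fun x hx => hgood v v1 v2 x h h1 h2 hx)
  have key2 : ∀ v v1 v12 : ℝ,
      γ * v + δ ≠ 0 → γ * v1 + δ ≠ 0 → ∀ v2,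
      Pcl a₁ a₂ γ₁ ζ α β γ δ v v1 v2 v12
        = c * (8 * a₁ ^ 2 * (v + v12) + 8 * a₁ * a₂ * (v1 + v2)) := by
    intro v v1 v12 h h1
    exact ext_aux (f := fun x => Pcl a₁ a₂ γ₁ ζ α β γ δ v v1 x v12)
      (g := fun x => c * (8 * a₁ ^ 2 * (v + v12) + 8 * a₁ * a₂ * (v1 + x)))
      (by unfold Pcl; fun_prop) (by fun_prop) hγor
      (fun x hx => key1 v v1 x h h1 hx v12)
  have key3 : ∀ v v2 v12 : ℝ,
      γ * v + δ ≠ 0 → ∀ v1,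
      Pcl a₁ a₂ γ₁ ζ α β γ δ v v1 v2 v12
        = c * (8 * a₁ ^ 2 * (v + v12) + 8 * a₁ * a₂ * (v1 + v2)) := by
    intro v v2 v12 h
    exact ext_aux (f := fun x => Pcl a₁ a₂ γ₁ ζ α β γ δ v x v2 v12)
      (g := fun x => c * (8 * a₁ ^ 2 * (v + v12) + 8 * a₁ * a₂ * (x + v2)))
      (by unfold Pcl; fun_prop) (by fun_prop) hγor
      (fun x hx => key2 v x v12 h hx v2)
  have key : ∀ v v1 v2 v12 : ℝ,
      Pcl a₁ a₂ γ₁ ζ α β γ δ v v1 v2 v12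
        = c * (8 * a₁ ^ 2 * (v + v12) + 8 * a₁ * a₂ * (v1 + v2)) := by
    intro v v1 v2 v12
    exact ext_aux (f := fun x => Pcl a₁ a₂ γ₁ ζ α β γ δ x v1 v2 v12)
      (g := fun x => c * (8 * a₁ ^ 2 * (x + v12) + 8 * a₁ * a₂ * (v1 + v2)))
      (by unfold Pcl; fun_prop) (by fun_prop) hγor
      (fun x hx => key3 x v2 v12 hx v1) v
  -- instantiate at the 16 vertices of the unit cube
  have h0000 := key 0 0 0 0
  have h0001 := key 0 0 0 1
  have h0010 := key 0 0 1 0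
  have h0011 := key 0 0 1 1
  have h0100 := key 0 1 0 0
  have h0101 := key 0 1 0 1
  have h0110 := key 0 1 1 0
  have h0111 := key 0 1 1 1
  have h1000 := key 1 0 0 0
  have h1001 := key 1 0 0 1
  have h1010 := key 1 0 1 0
  have h1011 := key 1 0 1 1
  have h1100 := key 1 1 0 0
  have h1101 := key 1 1 0 1
  have h1110 := key 1 1 1 0
  have h1111 := key 1 1 1 1
  unfold Pcl at h0000 h0001 h0010 h0011 h0100 h0101 h0110 h0111 h1000 h1001 h1010 h1011 h1100 h1101 h1110 h1111
  -- Step 1: γ₁α + 2a₁γ = 0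
  have hG1 : (2 * (a₁ - a₂) * (α * δ - β * γ)) * (γ₁ * α + 2 * a₁ * γ) ^ 2 = 0 := by
    linear_combination h1011 - h1010 - h1001 + h1000 - h0111 + h0110 + h0101 - h0100
  have hne1 : 2 * (a₁ - a₂) * (α * δ - β * γ) ≠ 0 :=
    mul_ne_zero (mul_ne_zero two_ne_zero hdiff) hdet
  have hT0 : γ₁ * α + 2 * a₁ * γ = 0 := by
    have hsq := (mul_eq_zero.mp hG1).resolve_left hne1
    exact pow_eq_zero_iff (two_ne_zero) |>.mp hsq
  have hα : α ≠ 0 := by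
    intro h
    apply hdet
    have hγ0 : γ = 0 := by
      have h2 : 2 * a₁ * γ = 0 := by rw [h] at hT0; linarith
      rcases mul_eq_zero.mp h2 with h3 | h3
      · exact absurd h3 (by positivity)
      · exact h3
    rw [h, hγ0]; ring
  -- Step 2: ζ
  have hz4 : (16 * a₁ ^ 2 * α ^ 4) * (4 * a₁ ^ 3 * ζ - (a₁ + a₂) * γ₁ ^ 3) = 0 := by
    linear_combination 8 * a₁ ^ 3 *
        (h1111 - h1110 - h1101 - h1011 - h0111 + h1100 + h1010 + h1001 + h0110 + h0101
          + h0011 - h1000 - h0100 - h0010 - h0001 + h0000)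
      - (16 * a₁ ^ 2 * a₂ * γ₁ ^ 2 * α ^ 3 + 16 * a₁ ^ 3 * γ₁ ^ 2 * α ^ 3
          + 64 * a₁ ^ 3 * a₂ * γ₁ * α ^ 2 * γ + 64 * a₁ ^ 4 * γ₁ * α ^ 2 * γ
          + 64 * a₁ ^ 4 * a₂ * α * γ ^ 2 + 64 * a₁ ^ 5 * α * γ ^ 2) * hT0
  have hzne : (16 * a₁ ^ 2 * α ^ 4) ≠ 0 := by positivity
  have hz : 4 * a₁ ^ 3 * ζ - (a₁ + a₂) * γ₁ ^ 3 = 0 :=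
    (mul_eq_zero.mp hz4).resolve_left hzne
  have hζ : ζ = (a₁ + a₂) * γ₁ ^ 3 / (4 * a₁ ^ 3) := by
    field_simp
    linarith
  -- Step 3: β = 0
  have hbe3 : (2 * (a₁ + a₂)) * (β * (γ₁ * β + 2 * a₁ * δ) ^ 3) = 0 := by
    linear_combination a₁ * h0000 - 2 * β ^ 4 * hz
  have hbe' : β * (γ₁ * β + 2 * a₁ * δ) ^ 3 = 0 :=
    (mul_eq_zero.mp hbe3).resolve_left (mul_ne_zero two_ne_zero hsum)
  have hβ : β = 0 := by
    rcases mul_eq_zero.mp hbe' with h | h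
    · exact h
    · exfalso
      have h1 : γ₁ * β + 2 * a₁ * δ = 0 :=
        pow_eq_zero_iff (three_ne_zero) |>.mp h
      apply hdet
      have h2 : 2 * a₁ * (α * δ - β * γ) = 0 := by
        linear_combination α * h1 - β * hT0
      rcases mul_eq_zero.mp h2 with h3 | h3
      · exact absurd h3 (by positivity)
      · exact h3
  refine ⟨hζ, hβ, ?_⟩
  field_simp
  linarith
end
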